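/- arXiv:0803.4130 — 3 statements merged into one kernel-verified Lean document; each statement's English description precedes it below -/
import Mathlib

section
/- Let π : G → H be a continuous epimorphism of compact Hausdorff groups with kernel P, let X be a G-space and Y an H-space, and let f : X → Y be a perfect continuous surjection satisfying: (1) f(g·x) = π(g)·f(x) for all g ∈ G, x ∈ X; (2) π(G_x) = H_{f(x)} for all x ∈ X; (3) whenever f(x) = f(x'), the points x and x' lie on the same G-orbit. Then the induced map θ : X/P → Y, θ(P·x) = f(x), is well-defined, H-equivariant, isovariant, and the induced map of orbit spaces is a homeomorphism; hence θ is an H-equivariant homeomorphism. -/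
/-!
Continuity and closedness of `θ` come from those of `f` through the quotient map `X → X/P`.
Injectivity is where the hypotheses on orbits and stabilizers enter: if `f x = f x'` then
`x = g • x'` for some `g` with `π g` fixing `f x'`, so `π g = π s` for some `s` fixing `x'`,
and then `g s⁻¹ ∈ P` carries `x'` to `x`. A continuous closed bijection is a homeomorphism.
-/

open MulAction

/-- The map `θ : X/P → Y`, `θ(P·x) = f x`, induced by a `π`-equivariant map
`f : X → Y`, where `P = ker π`. -/
def inducedTheta {G H : Type*} [Group G] [Group H] (π : G →* H)
    {X Y : Type*} [MulAction G X] [MulAction H Y] (f : X → Y)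
    (hequi : ∀ (g : G) (x : X), f (g • x) = π g • f x) :
    Quotient (orbitRel π.ker X) → Y :=
  Quotient.lift f (by
    intro a b hab
    obtain ⟨p, hp⟩ := (orbitRel_apply (G := ↥π.ker)).mp hab
    rw [← hp]
    show f ((p : G) • b) = f b
    rw [hequi, show π (p : G) = 1 from p.2, one_smul])

section

variable {G H X Y : Type*} [Group G] [Group H] [MulAction G X] [MulAction H Y] (π : G →* H)

theorem mk_smul_eq_mk_of_mem_map_stabilizer {g : G} {x : X}
    (hg : π g ∈ (stabilizer G x).map π) :
    Quotient.mk (orbitRel π.ker X) (g • x) = Quotient.mk (orbitRel π.ker X) x := by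
  obtain ⟨s, hs, hsg⟩ := hg
  have hker : g * s⁻¹ ∈ π.ker := by
    rw [MonoidHom.mem_ker, map_mul, map_inv, hsg, mul_inv_cancel]
  refine Quotient.sound ((orbitRel_apply (G := π.ker)).mpr ⟨⟨g * s⁻¹, hker⟩, ?_⟩)
  change (g * s⁻¹) • x = g • x
  rw [mul_smul, inv_smul_eq_iff.mpr (mem_stabilizer_iff.mp hs).symm]

variable (f : X → Y)

@[simp]
theorem inducedTheta_mk (hequi : ∀ (g : G) (x : X), f (g • x) = π g • f x) (x : X) :
    inducedTheta π f hequi (Quotient.mk (orbitRel π.ker X) x) = f x :=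
  rfl

theorem inducedTheta_mk_smul (hequi : ∀ (g : G) (x : X), f (g • x) = π g • f x) (g : G) (x : X) :
    inducedTheta π f hequi (Quotient.mk (orbitRel π.ker X) (g • x)) =
      π g • inducedTheta π f hequi (Quotient.mk (orbitRel π.ker X) x) :=
  hequi g x

theorem mk_smul_eq_mk_iff_mem_stabilizer (hequi : ∀ (g : G) (x : X), f (g • x) = π g • f x)
    {x : X} (hstab : stabilizer H (f x) ≤ (stabilizer G x).map π) (g : G) :
    Quotient.mk (orbitRel π.ker X) (g • x) = Quotient.mk (orbitRel π.ker X) x ↔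
      π g ∈ stabilizer H (f x) := by
  refine ⟨fun h ↦ ?_, fun hg ↦ mk_smul_eq_mk_of_mem_map_stabilizer π (hstab hg)⟩
  rw [mem_stabilizer_iff, ← hequi, ← inducedTheta_mk π f hequi, h, inducedTheta_mk]

theorem inducedTheta_injective (hequi : ∀ (g : G) (x : X), f (g • x) = π g • f x)
    (hstab : ∀ x : X, stabilizer H (f x) ≤ (stabilizer G x).map π)
    (horb : ∀ x x' : X, f x = f x' → x ∈ orbit G x') :
    Function.Injective (inducedTheta π f hequi) := by
  rintro ⟨x⟩ ⟨x'⟩ (hxx' : f x = f x')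
  obtain ⟨g, rfl⟩ := horb x x' hxx'
  refine (mk_smul_eq_mk_iff_mem_stabilizer π f hequi (hstab x') g).mpr ?_
  rw [mem_stabilizer_iff, ← hequi, hxx']

theorem inducedTheta_surjective (hequi : ∀ (g : G) (x : X), f (g • x) = π g • f x)
    (hfs : Function.Surjective f) : Function.Surjective (inducedTheta π f hequi) := fun y ↦
  let ⟨x, hx⟩ := hfs y; ⟨Quotient.mk _ x, hx⟩

variable [TopologicalSpace X] [TopologicalSpace Y]

theorem continuous_inducedTheta (hequi : ∀ (g : G) (x : X), f (g • x) = π g • f x)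
    (hfc : Continuous f) : Continuous (inducedTheta π f hequi) :=
  hfc.quotient_lift _

theorem isClosedMap_inducedTheta (hequi : ∀ (g : G) (x : X), f (g • x) = π g • f x)
    (hfcl : IsClosedMap f) : IsClosedMap (inducedTheta π f hequi) :=
  IsClosedMap.of_comp_surjective Quotient.mk_surjective continuous_quotient_mk' hfcl

end

theorem stmt11_general {G H : Type*} [Group G] [Group H]
    (π : G →* H)
    {X Y : Type*} [TopologicalSpace X] [TopologicalSpace Y]
    [MulAction G X] [MulAction H Y]
    (f : X → Y) (hfc : Continuous f) (hfcl : IsClosedMap f)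
    (hfs : Function.Surjective f)
    (hequi : ∀ (g : G) (x : X), f (g • x) = π g • f x)
    (hstab : ∀ x : X, (MulAction.stabilizer G x).map π = MulAction.stabilizer H (f x))
    (horb : ∀ x x' : X, f x = f x' → x ∈ orbit G x') :
    IsHomeomorph (inducedTheta π f hequi) ∧
      (∀ (g : G) (x : X),
        inducedTheta π f hequi (Quotient.mk (orbitRel π.ker X) (g • x)) =
          π g • inducedTheta π f hequi (Quotient.mk (orbitRel π.ker X) x)) ∧
      (∀ (x : X) (g : G),
        Quotient.mk (orbitRel π.ker X) (g • x) = Quotient.mk (orbitRel π.ker X) x ↔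
          π g ∈ MulAction.stabilizer H (f x)) := by
  have hstab_le : ∀ x : X, stabilizer H (f x) ≤ (stabilizer G x).map π := fun x ↦ (hstab x).ge
  refine ⟨?_, inducedTheta_mk_smul π f hequi,
    fun x ↦ mk_smul_eq_mk_iff_mem_stabilizer π f hequi (hstab_le x)⟩
  exact isHomeomorph_iff_continuous_isClosedMap_bijective.mpr
    ⟨continuous_inducedTheta π f hequi hfc, isClosedMap_inducedTheta π f hequi hfcl,
      inducedTheta_injective π f hequi hstab_le horb, inducedTheta_surjective π f hequi hfs⟩

/-- Let `π : G → H` be a continuous epimorphism of compact Hausdorff groups with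
kernel `P`, `X` a `G`-space, `Y` an `H`-space, and `f : X → Y` a perfect
continuous surjection that is `π`-equivariant, maps stabilizers onto
stabilizers, and identifies points only within `G`-orbits.  Then the induced map
`θ : X/P → Y`, `θ(P·x) = f x`, is well defined, equivariant, isovariant, and a
homeomorphism — hence an `H`-equivariant homeomorphism. -/
theorem stmt11 {G H : Type*} [Group G] [TopologicalSpace G] [IsTopologicalGroup G]
    [CompactSpace G] [T2Space G] [Group H] [TopologicalSpace H]
    [IsTopologicalGroup H] [CompactSpace H] [T2Space H]
    (π : G →* H) (hπc : Continuous π) (hπs : Function.Surjective π)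
    {X Y : Type*} [TopologicalSpace X] [TopologicalSpace Y]
    [MulAction G X] [ContinuousSMul G X] [MulAction H Y] [ContinuousSMul H Y]
    (f : X → Y) (hfc : Continuous f) (hfcl : IsClosedMap f)
    (hffib : ∀ y : Y, IsCompact (f ⁻¹' {y})) (hfs : Function.Surjective f)
    (hequi : ∀ (g : G) (x : X), f (g • x) = π g • f x)
    (hstab : ∀ x : X, (MulAction.stabilizer G x).map π = MulAction.stabilizer H (f x))
    (horb : ∀ x x' : X, f x = f x' → x ∈ orbit G x') :
    IsHomeomorph (inducedTheta π f hequi) ∧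
      (∀ (g : G) (x : X),
        inducedTheta π f hequi (Quotient.mk (orbitRel π.ker X) (g • x)) =
          π g • inducedTheta π f hequi (Quotient.mk (orbitRel π.ker X) x)) ∧
      (∀ (x : X) (g : G),
        Quotient.mk (orbitRel π.ker X) (g • x) = Quotient.mk (orbitRel π.ker X) x ↔
          π g ∈ MulAction.stabilizer H (f x)) :=
  stmt11_general π f hfc hfcl hfs hequi hstab horb
end

section
/- Let π' : K → L be a continuous epimorphism of compact groups with kernel Q, let π : G → H be a continuous epimorphism of compact groups extending π' (where K ≤ G and L ≤ H are closed subgroups with π(K) = L), let P = ker π, let S be a K-space, T an L-space, and f' : S → T a perfect surjection satisfying the Q-orbit-projection properties with respect to π'. Then the formula f([g, s]_K) = [π(g), f'(s)]_L gives a well-defined continuous map f : G ×_K S → H ×_L T between twisted products, f is a perfect surjection, and f satisfies the P-orbit-projection properties with respect to π (equivariance f(g·w) = π(g)·f(w), stabilizer condition π(G_w) = H_{f(w)}, and f(w) = f(w') implies w, w' are on the same G-orbit). -/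
/-!
`π × f' : G × S → H × T` is proper (π by compactness of `G`), and the quotient map
`H × T → H ×_L T` is proper because it is the orbit map of the compact group `L`; hence `f`,
through which their composite factors via the surjection `G × S → G ×_K S`, is proper. The
equivariance, stabilizer and orbit properties are checked on representatives, transporting
elements of `L` back to `K` along `π'`.
-/

open MulAction

/-- The defining relation of the twisted product `G ×_K S`:
`(gk, s) ∼ (g, k·s)` for `k ∈ K`. -/
def twistedSetoid (G : Type*) [Group G] (K : Subgroup G) (S : Type*)
    [MulAction K S] : Setoid (G × S) where
  r a b := ∃ k : K, b.1 = a.1 * (k : G) ∧ a.2 = k • b.2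
  iseqv := by
    constructor
    · intro a; exact ⟨1, by simp⟩
    · rintro a b ⟨k, h1, h2⟩
      refine ⟨k⁻¹, ?_, ?_⟩
      · rw [h1]; simp [mul_assoc]
      · rw [h2]; simp
    · rintro a b c ⟨k, h1, h2⟩ ⟨l, h3, h4⟩
      refine ⟨k * l, ?_, ?_⟩
      · rw [h3, h1]; simp [mul_assoc]
      · rw [h2, h4, mul_smul]

/-- The `G`-action `g'·[g, s] = [g'g, s]` on the twisted product `G ×_K S`. -/
instance twistedAction (G : Type*) [Group G] (K : Subgroup G) (S : Type*)
    [MulAction K S] : MulAction G (Quotient (twistedSetoid G K S)) where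
  smul g := Quotient.map (fun p => (g * p.1, p.2)) (by
    rintro a b ⟨k, h1, h2⟩
    refine ⟨k, ?_, h2⟩
    show g * b.1 = g * a.1 * (k : G)
    rw [h1, mul_assoc])
  one_smul := by
    intro q
    induction q using Quotient.ind
    exact congrArg (Quotient.mk _) (Prod.ext (one_mul _) rfl)
  mul_smul := by
    intro g h q
    induction q using Quotient.ind
    exact congrArg (Quotient.mk _) (Prod.ext (mul_assoc _ _ _) rfl)

/-- The map `G ×_K S → H ×_L T`, `[g, s] ↦ [π g, f' s]`, induced by a
compatible pair `(π, f')` (well-definedness is the lifting proof). -/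
def twistedMap {G H : Type*} [Group G] [Group H] {K : Subgroup G}
    {L : Subgroup H} (π : G →* H) (π' : K →* L)
    (hcomm : ∀ k : K, ((π' k : L) : H) = π (k : G))
    {S T : Type*} [MulAction K S] [MulAction L T] (f' : S → T)
    (hequi' : ∀ (k : K) (s : S), f' (k • s) = π' k • f' s) :
    Quotient (twistedSetoid G K S) → Quotient (twistedSetoid H L T) :=
  Quotient.map (fun p => (π p.1, f' p.2)) (by
    rintro a b ⟨k, h1, h2⟩
    refine ⟨π' k, ?_, ?_⟩
    · show π b.1 = π a.1 * ((π' k : L) : H)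
      rw [h1, map_mul, hcomm]
    · show f' a.2 = π' k • f' b.2
      rw [h2, hequi'])

section TwistedProduct

variable {H : Type*} [Group H] {L : Subgroup H} {T : Type*} [MulAction L T]

theorem twistedSetoid_rel_iff {z a : H × T} :
    twistedSetoid H L T z a ↔ ∃ l : L, (z.1 * l, l⁻¹ • z.2) = a := by
  refine exists_congr fun l => ?_
  rw [Prod.ext_iff, inv_smul_eq_iff, eq_comm (a := a.1)]

theorem preimage_image_twistedMk (A : Set (H × T)) :
    Quotient.mk (twistedSetoid H L T) ⁻¹' (Quotient.mk _ '' A) =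
      {z : H × T | ∃ l : L, (z.1 * l, l⁻¹ • z.2) ∈ A} := by
  ext z
  simp only [Set.mem_preimage, Set.mem_image, Quotient.eq_iff_equiv, Set.mem_ofPred_eq]
  constructor
  · rintro ⟨a, ha, hza⟩
    obtain ⟨l, rfl⟩ := twistedSetoid_rel_iff.mp ((twistedSetoid H L T).symm hza)
    exact ⟨l, ha⟩
  · rintro ⟨l, hl⟩
    exact ⟨_, hl, (twistedSetoid H L T).symm (twistedSetoid_rel_iff.mpr ⟨l, rfl⟩)⟩

variable [TopologicalSpace H] [IsTopologicalGroup H] [CompactSpace L]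
  [TopologicalSpace T] [ContinuousSMul L T]

theorem isClosedMap_twistedMk : IsClosedMap (Quotient.mk (twistedSetoid H L T)) := by
  intro A hA
  have hq : Topology.IsQuotientMap (Quotient.mk (twistedSetoid H L T)) := isQuotientMap_quot_mk
  rw [← hq.isClosed_preimage, preimage_image_twistedMk]
  have hsat : {z : H × T | ∃ l : L, (z.1 * l, l⁻¹ • z.2) ∈ A} =
      Prod.snd '' {p : L × (H × T) | (p.2.1 * p.1, p.1⁻¹ • p.2.2) ∈ A} := by
    ext z
    simp
  rw [hsat]
  refine isClosedMap_snd_of_compactSpace _ (hA.preimage ?_)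
  fun_prop

theorem isCompact_twistedMk_fiber (y : H × T) :
    IsCompact (Quotient.mk (twistedSetoid H L T) ⁻¹' {Quotient.mk _ y}) := by
  have hfiber : Quotient.mk (twistedSetoid H L T) ⁻¹' {Quotient.mk _ y} =
      Set.range fun l : L => (y.1 * (l : H)⁻¹, l • y.2) := by
    rw [← Set.image_singleton, preimage_image_twistedMk]
    ext z
    simp only [Set.mem_ofPred_eq, Set.mem_singleton_iff, Set.mem_range]
    refine exists_congr fun l => ?_
    constructor <;> rintro rfl <;> simp
  rw [hfiber]
  exact isCompact_range (by fun_prop)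

theorem isProperMap_twistedMk : IsProperMap (Quotient.mk (twistedSetoid H L T)) :=
  isProperMap_iff_isClosedMap_and_compact_fibers.mpr
    ⟨continuous_quot_mk, isClosedMap_twistedMk,
      Quotient.ind isCompact_twistedMk_fiber⟩

end TwistedProduct

section TwistedMap

variable {G H : Type*} [Group G] [Group H] {K : Subgroup G} {L : Subgroup H}
  (π : G →* H) (π' : K →* L) (hcomm : ∀ k : K, ((π' k : L) : H) = π (k : G))
  {S T : Type*} [MulAction K S] [MulAction L T] (f' : S → T)
  (hequi' : ∀ (k : K) (s : S), f' (k • s) = π' k • f' s)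

theorem twistedMap_mk (g : G) (s : S) :
    twistedMap π π' hcomm f' hequi' (Quotient.mk _ (g, s)) = Quotient.mk _ (π g, f' s) :=
  rfl

theorem twistedMap_smul (g : G) (w : Quotient (twistedSetoid G K S)) :
    twistedMap π π' hcomm f' hequi' (g • w) = π g • twistedMap π π' hcomm f' hequi' w := by
  induction w using Quotient.ind with
  | _ p => exact congrArg (Quotient.mk _) (Prod.ext (map_mul π g p.1) rfl)

theorem twistedMap_surjective (hπ : Function.Surjective π) (hf' : Function.Surjective f') :
    Function.Surjective (twistedMap π π' hcomm f' hequi') := by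
  rintro ⟨h, t⟩
  obtain ⟨g, rfl⟩ := hπ h
  obtain ⟨s, rfl⟩ := hf' t
  exact ⟨Quotient.mk _ (g, s), rfl⟩

theorem map_stabilizer_twistedMap
    (hstab' : ∀ s : S, stabilizer L (f' s) ≤ (stabilizer K s).map π')
    (w : Quotient (twistedSetoid G K S)) :
    (stabilizer G w).map π = stabilizer H (twistedMap π π' hcomm f' hequi' w) := by
  refine le_antisymm ?_ ?_
  · rintro _ ⟨g, hg, rfl⟩
    rw [mem_stabilizer_iff, ← twistedMap_smul, mem_stabilizer_iff.mp hg]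
  induction w using Quotient.ind with
  | _ p =>
    obtain ⟨g, s⟩ := p
    intro h hh
    rw [mem_stabilizer_iff, twistedMap_mk] at hh
    obtain ⟨l, hgl, hsl⟩ := Quotient.exact hh
    obtain ⟨k, hk, rfl⟩ := hstab' s (mem_stabilizer_iff.mpr hsl.symm)
    -- `h` fixes `[π g, f' s]` through `l = π' k`, so it is the image of `g k⁻¹ g⁻¹`
    refine ⟨g * (k : G)⁻¹ * g⁻¹, ?_, ?_⟩
    · refine mem_stabilizer_iff.mpr (Quotient.sound ⟨k, ?_, (mem_stabilizer_iff.mp hk).symm⟩)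
      change g = g * (k : G)⁻¹ * g⁻¹ * g * k
      group
    · change π g = h * π g * π' k at hgl
      rw [map_mul, map_mul, map_inv, map_inv, ← hcomm, mul_inv_eq_iff_eq_mul,
        mul_inv_eq_iff_eq_mul]
      exact hgl

theorem mem_orbit_of_twistedMap_eq (hπ' : Function.Surjective π')
    (horb' : ∀ s s' : S, f' s = f' s' → s ∈ orbit K s')
    {w w' : Quotient (twistedSetoid G K S)}
    (h : twistedMap π π' hcomm f' hequi' w = twistedMap π π' hcomm f' hequi' w') :
    w ∈ orbit G w' := by
  induction w using Quotient.ind with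
  | _ p =>
  induction w' using Quotient.ind with
  | _ p' =>
    obtain ⟨g, s⟩ := p
    obtain ⟨g', s'⟩ := p'
    obtain ⟨l, -, hsl⟩ := Quotient.exact h
    obtain ⟨k, rfl⟩ := hπ' l
    obtain ⟨k₁, hk₁⟩ := horb' s (k • s') (by rw [hequi']; exact hsl)
    refine ⟨g * ((k₁ * k : K) : G) * g'⁻¹, Quotient.sound ⟨(k₁ * k)⁻¹, ?_, ?_⟩⟩
    · change g = g * ((k₁ * k : K) : G) * g'⁻¹ * g' * (((k₁ * k)⁻¹ : K) : G)
      simp [mul_assoc]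
    · change s' = (k₁ * k)⁻¹ • s
      rw [eq_inv_smul_iff, mul_smul]
      exact hk₁

theorem isProperMap_twistedMap [TopologicalSpace G] [TopologicalSpace H] [IsTopologicalGroup H]
    [CompactSpace L] [TopologicalSpace S] [TopologicalSpace T] [ContinuousSMul L T]
    (hπ : IsProperMap π) (hf' : IsProperMap f') :
    IsProperMap (twistedMap π π' hcomm f' hequi') := by
  have hF : IsProperMap (Prod.map π f') := hπ.prodMap hf'
  refine isProperMap_of_comp_of_surj continuous_quot_mk ?_
    (isProperMap_twistedMk.comp hF) Quotient.mk_surjective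
  exact (continuous_quot_mk.comp hF.continuous).quotient_lift _

end TwistedMap

theorem stmt15_general {G H : Type*} [Group G] [TopologicalSpace G]
    [CompactSpace G] [Group H] [TopologicalSpace H]
    [IsTopologicalGroup H] [CompactSpace H] [T2Space H]
    (K : Subgroup G) (L : Subgroup H)
    (hLc : IsClosed (L : Set H))
    (π : G →* H) (hπc : Continuous π) (hπs : Function.Surjective π)
    (π' : K →* L) (hπ's : Function.Surjective π')
    (hcomm : ∀ k : K, ((π' k : L) : H) = π (k : G))
    {S T : Type*} [TopologicalSpace S] [TopologicalSpace T]
    [MulAction K S] [MulAction L T] [ContinuousSMul L T]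
    (f' : S → T) (hf'c : Continuous f') (hf'cl : IsClosedMap f')
    (hf'fib : ∀ t : T, IsCompact (f' ⁻¹' {t})) (hf's : Function.Surjective f')
    (hequi' : ∀ (k : K) (s : S), f' (k • s) = π' k • f' s)
    (hstab' : ∀ s : S,
      (MulAction.stabilizer K s).map π' = MulAction.stabilizer L (f' s))
    (horb' : ∀ s s' : S, f' s = f' s' → s ∈ orbit K s') :
    (∀ (g : G) (s : S),
        twistedMap π π' hcomm f' hequi' (Quotient.mk (twistedSetoid G K S) (g, s)) =
          Quotient.mk (twistedSetoid H L T) (π g, f' s)) ∧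
      Continuous (twistedMap π π' hcomm f' hequi') ∧
      Function.Surjective (twistedMap π π' hcomm f' hequi') ∧
      IsClosedMap (twistedMap π π' hcomm f' hequi') ∧
      (∀ w, IsCompact (twistedMap π π' hcomm f' hequi' ⁻¹' {w})) ∧
      (∀ (g : G) (w : Quotient (twistedSetoid G K S)),
        twistedMap π π' hcomm f' hequi' (g • w) =
          π g • twistedMap π π' hcomm f' hequi' w) ∧
      (∀ w : Quotient (twistedSetoid G K S),
        (MulAction.stabilizer G w).map π =
          MulAction.stabilizer H (twistedMap π π' hcomm f' hequi' w)) ∧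
      (∀ w w' : Quotient (twistedSetoid G K S),
        twistedMap π π' hcomm f' hequi' w = twistedMap π π' hcomm f' hequi' w' →
          w ∈ orbit G w') := by
  have : CompactSpace L := isCompact_iff_compactSpace.mp hLc.isCompact
  have hf' : IsProperMap f' :=
    isProperMap_iff_isClosedMap_and_compact_fibers.mpr ⟨hf'c, hf'cl, hf'fib⟩
  have hf := isProperMap_twistedMap π π' hcomm f' hequi' hπc.isProperMap hf'
  exact ⟨twistedMap_mk π π' hcomm f' hequi', hf.continuous,
    twistedMap_surjective π π' hcomm f' hequi' hπs hf's, hf.isClosedMap,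
    fun w => hf.isCompact_preimage isCompact_singleton, twistedMap_smul π π' hcomm f' hequi',
    map_stabilizer_twistedMap π π' hcomm f' hequi' fun s => (hstab' s).ge,
    fun _ _ => mem_orbit_of_twistedMap_eq π π' hcomm f' hequi' hπ's horb'⟩

/-- Let `π : G → H` be a continuous epimorphism of compact groups restricting to
an epimorphism `π' : K → L` of closed subgroups (`P = ker π`, `Q = ker π'`), let
`S` be a `K`-space, `T` an `L`-space, and `f' : S → T` a perfect surjection with
the `Q`-orbit-projection properties relative to `π'`.  Then
`f([g,s]) = [π g, f' s]` is a well-defined continuous perfect surjection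
`G ×_K S → H ×_L T` satisfying the `P`-orbit-projection properties relative to
`π`. -/
theorem stmt15 {G H : Type*} [Group G] [TopologicalSpace G] [IsTopologicalGroup G]
    [CompactSpace G] [T2Space G] [Group H] [TopologicalSpace H]
    [IsTopologicalGroup H] [CompactSpace H] [T2Space H]
    (K : Subgroup G) (L : Subgroup H)
    (hKc : IsClosed (K : Set G)) (hLc : IsClosed (L : Set H))
    (π : G →* H) (hπc : Continuous π) (hπs : Function.Surjective π)
    (π' : K →* L) (hπ's : Function.Surjective π')
    (hcomm : ∀ k : K, ((π' k : L) : H) = π (k : G))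
    {S T : Type*} [TopologicalSpace S] [TopologicalSpace T]
    [MulAction K S] [ContinuousSMul K S] [MulAction L T] [ContinuousSMul L T]
    (f' : S → T) (hf'c : Continuous f') (hf'cl : IsClosedMap f')
    (hf'fib : ∀ t : T, IsCompact (f' ⁻¹' {t})) (hf's : Function.Surjective f')
    (hequi' : ∀ (k : K) (s : S), f' (k • s) = π' k • f' s)
    (hstab' : ∀ s : S,
      (MulAction.stabilizer K s).map π' = MulAction.stabilizer L (f' s))
    (horb' : ∀ s s' : S, f' s = f' s' → s ∈ orbit K s') :
    (∀ (g : G) (s : S),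
        twistedMap π π' hcomm f' hequi' (Quotient.mk (twistedSetoid G K S) (g, s)) =
          Quotient.mk (twistedSetoid H L T) (π g, f' s)) ∧
      Continuous (twistedMap π π' hcomm f' hequi') ∧
      Function.Surjective (twistedMap π π' hcomm f' hequi') ∧
      IsClosedMap (twistedMap π π' hcomm f' hequi') ∧
      (∀ w, IsCompact (twistedMap π π' hcomm f' hequi' ⁻¹' {w})) ∧
      (∀ (g : G) (w : Quotient (twistedSetoid G K S)),
        twistedMap π π' hcomm f' hequi' (g • w) =
          π g • twistedMap π π' hcomm f' hequi' w) ∧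
      (∀ w : Quotient (twistedSetoid G K S),
        (MulAction.stabilizer G w).map π =
          MulAction.stabilizer H (twistedMap π π' hcomm f' hequi' w)) ∧
      (∀ w w' : Quotient (twistedSetoid G K S),
        twistedMap π π' hcomm f' hequi' w = twistedMap π π' hcomm f' hequi' w' →
          w ∈ orbit G w') :=
  stmt15_general K L hLc π hπc hπs π' hπ's hcomm f' hf'c hf'cl hf'fib hf's hequi' hstab' horb'
end

section
/- Let G be a compact Hausdorff group and let {P_α}_{α<ω} be a decreasing transfinite family of closed normal subgroups of G with P_1 = G, P_β ≤ P_α for α < β, P_α = ⋂_{α'<α} P_{α'} at limit ordinals, and ⋂_{α<ω} P_α = {e}. Let G act continuously on a compact Hausdorff space X. Then the natural map f : X → lim← {X/P_α, f^β_α}, f(x) = (P_α·x)_α, into the inverse limit of the P_α-orbit spaces along the natural projections f^β_α : X/P_β → X/P_α (α < β), is a homeomorphism, and it is equivariant with respect to the natural actions. -/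
/-!
Every orbit space `X/P_α` is Hausdorff, since a compact group acts properly on a compact
Hausdorff space. The map `x ↦ (P_α·x)_α` is then a continuous map from a compact space to a
Hausdorff one, so it suffices that it is bijective, and both halves are instances of the finite
intersection property. If `x` and `y` have the same image, the closed sets
`{g ∈ P_α | g • y = x}` are nonempty and decreasing, so they share an element `g`, which lies in
`⋂ P_α = {e}`; hence `x = y`. A compatible thread `(u_α)` is hit by any point of the intersection
of the decreasing nonempty closed fibres over the `u_α`.
-/

open MulAction

variable {G : Type*} [Group G] {X : Type*} [MulAction G X]

/-- The natural action of `G` on the `P`-orbit space `X/P`, for `P ⊴ G`. -/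
instance quotMulAction (P : Subgroup G) [hN : P.Normal] :
    MulAction G (Quotient (orbitRel P X)) where
  smul g := Quotient.map (fun x => g • x) (by
    intro a b hab
    obtain ⟨p, hp⟩ := hab
    refine ⟨⟨g * (p : G) * g⁻¹, hN.conj_mem (p : G) p.2 g⟩, ?_⟩
    show (g * (p : G) * g⁻¹) • (g • b) = g • a
    rw [smul_smul, show g * (p : G) * g⁻¹ * g = g * (p : G) by group, ← smul_smul, ← hp]
    rfl)
  one_smul := by
    intro q
    induction q using Quotient.ind
    exact congrArg _ (one_smul G _)
  mul_smul := by
    intro g h q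
    induction q using Quotient.ind
    exact congrArg _ (mul_smul g h _)

/-- The natural projection `X/Q → X/P` of orbit spaces for `Q ≤ P`. -/
def orbitProj {G : Type*} [Group G] (X : Type*) [MulAction G X]
    {P Q : Subgroup G} (h : Q ≤ P) :
    Quotient (orbitRel Q X) → Quotient (orbitRel P X) :=
  Quotient.map id (by
    intro a b hab
    obtain ⟨q, hq⟩ := (orbitRel_apply (G := ↥Q)).mp hab
    exact ⟨⟨(q : G), h q.2⟩, hq⟩)

lemma CompactSpace.nonempty_iInter_of_antitone {Y : Type*} [TopologicalSpace Y] [CompactSpace Y]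
    {ι : Type*} [Nonempty ι] [Preorder ι] [IsDirectedOrder ι] {t : ι → Set Y}
    (ht : Antitone t) (hne : ∀ i, (t i).Nonempty) (hcl : ∀ i, IsClosed (t i)) :
    (⋂ i, t i).Nonempty :=
  IsCompact.nonempty_iInter_of_directed_nonempty_isCompact_isClosed t ht.directed_ge hne
    (fun i => (hcl i).isCompact) hcl

section OrbitSpaces

variable [TopologicalSpace G] [TopologicalSpace X]

lemma properSMul_of_compactSpace [CompactSpace G] [CompactSpace X] [T2Space X]
    [ContinuousSMul G X] : ProperSMul G X :=
  ⟨((continuous_fst.smul continuous_snd).prodMk continuous_snd).isProperMap⟩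

lemma t2Space_quotient_orbitRel_of_isClosed [CompactSpace G] [CompactSpace X] [T2Space X]
    [ContinuousSMul G X] {H : Subgroup G} (hH : IsClosed (H : Set G)) :
    T2Space (Quotient (orbitRel H X)) :=
  have := properSMul_of_compactSpace (G := G) (X := X)
  t2Space_quotient_mulAction_of_properSMul

variable {ι : Type*} [Nonempty ι] [Preorder ι] [IsDirectedOrder ι] {P : ι → Subgroup G}

lemma eq_of_forall_mk_orbitRel_eq [CompactSpace G] [T1Space X] [ContinuousSMul G X]
    (hP : Antitone P) (hCl : ∀ α, IsClosed (P α : Set G)) (htriv : ⨅ α, P α = ⊥) {x y : X}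
    (h : ∀ α, Quotient.mk (orbitRel (P α) X) x = Quotient.mk (orbitRel (P α) X) y) :
    x = y := by
  let S : ι → Set G := fun α => (P α : Set G) ∩ {g | g • y = x}
  have hne : ∀ α, (S α).Nonempty := fun α => by
    obtain ⟨g, hg⟩ := Quotient.exact (h α)
    exact ⟨g, g.2, hg⟩
  have hcl : ∀ α, IsClosed (S α) := fun α =>
    (hCl α).inter (isClosed_singleton.preimage (continuous_id.smul continuous_const))
  obtain ⟨g, hg⟩ := CompactSpace.nonempty_iInter_of_antitone
    (fun _ _ hab => Set.inter_subset_inter_left _ (hP hab)) hne hcl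
  have hg1 : g = 1 := by
    rw [← Subgroup.mem_bot, ← htriv, Subgroup.mem_iInf]
    exact fun α => (Set.mem_iInter.mp hg α).1
  have hgyx : g • y = x := (Set.mem_iInter.mp hg (Classical.arbitrary ι)).2
  rwa [hg1, one_smul, eq_comm] at hgyx

lemma exists_mk_orbitRel_eq_of_compatible [CompactSpace G] [CompactSpace X] [T2Space X]
    [ContinuousSMul G X] (hP : Antitone P) (hCl : ∀ α, IsClosed (P α : Set G))
    (u : ∀ α, Quotient (orbitRel (P α) X))
    (hu : ∀ α β (hab : α ≤ β), orbitProj X (hP hab) (u β) = u α) :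
    ∃ x : X, ∀ α, Quotient.mk (orbitRel (P α) X) x = u α := by
  have := fun α => t2Space_quotient_orbitRel_of_isClosed (X := X) (hCl α)
  let T : ι → Set X := fun α => Quotient.mk (orbitRel (P α) X) ⁻¹' {u α}
  have hanti : Antitone T := fun α β hab z (hz : _ = u β) => by
    change Quotient.mk _ z = u α
    rw [← hu α β hab, ← hz]
    rfl
  have hne : ∀ α, (T α).Nonempty := fun α => Quotient.exists_rep (u α)
  have hcl : ∀ α, IsClosed (T α) := fun α =>
    isClosed_singleton.preimage continuous_quotient_mk'
  obtain ⟨x, hx⟩ := CompactSpace.nonempty_iInter_of_antitone hanti hne hcl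
  exact ⟨x, Set.mem_iInter.mp hx⟩

end OrbitSpaces

theorem stmt18_general {G : Type*} [Group G] [TopologicalSpace G]
    [CompactSpace G] {X : Type*} [TopologicalSpace X]
    [CompactSpace X] [T2Space X] [MulAction G X] [ContinuousSMul G X]
    {ι : Type*} [LinearOrder ι] [OrderBot ι]
    (P : ι → Subgroup G) (hNor : ∀ α, (P α).Normal)
    (hCl : ∀ α, IsClosed ((P α : Subgroup G) : Set G))
    (hmono : ∀ {α β : ι}, α ≤ β → P β ≤ P α)
    (htriv : ⨅ α, P α = ⊥) :
    IsHomeomorph (fun x : X =>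
        (⟨fun α => Quotient.mk (orbitRel (P α) X) x, fun _ _ _ => rfl⟩ :
          {u : ∀ α, Quotient (orbitRel (P α) X) //
            ∀ (α β : ι) (hab : α ≤ β), orbitProj X (hmono hab) (u β) = u α})) ∧
      ∀ (g : G) (x : X) (α : ι),
        haveI := hNor α
        Quotient.mk (orbitRel (P α) X) (g • x) =
          g • Quotient.mk (orbitRel (P α) X) x := by
  have : Nonempty ι := ⟨⊥⟩
  have hP : Antitone P := fun _ _ hab => hmono hab
  have := fun α => t2Space_quotient_orbitRel_of_isClosed (X := X) (hCl α)
  refine ⟨isHomeomorph_iff_continuous_bijective.mpr ⟨?_, ?_, ?_⟩, fun _ _ _ => rfl⟩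
  · exact (continuous_pi fun α => continuous_quotient_mk').subtype_mk _
  · exact fun x y h => eq_of_forall_mk_orbitRel_eq hP hCl htriv fun α =>
      congrFun (congrArg Subtype.val h) α
  · intro u
    obtain ⟨x, hx⟩ := exists_mk_orbitRel_eq_of_compatible hP hCl u.1 u.2
    exact ⟨x, Subtype.ext (funext hx)⟩

/-- Let `{P α}` be a decreasing transfinite family of closed normal subgroups of
a compact Hausdorff group `G` with `P ⊥ = G`, `P α = ⋂_{β<α} P β` at limit
indices, and `⋂ P α = {e}`, and let `G` act continuously on a compact Hausdorff
space `X`.  Then the natural map `x ↦ (P_α·x)_α` is an equivariant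
homeomorphism of `X` onto the inverse limit of the orbit spaces `X/P_α`. -/
theorem stmt18 {G : Type*} [Group G] [TopologicalSpace G] [IsTopologicalGroup G]
    [CompactSpace G] [T2Space G] {X : Type*} [TopologicalSpace X]
    [CompactSpace X] [T2Space X] [MulAction G X] [ContinuousSMul G X]
    {ι : Type*} [LinearOrder ι] [OrderBot ι]
    (P : ι → Subgroup G) (hNor : ∀ α, (P α).Normal)
    (hCl : ∀ α, IsClosed ((P α : Subgroup G) : Set G))
    (hmono : ∀ {α β : ι}, α ≤ β → P β ≤ P α)
    (hbot : P ⊥ = ⊤)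
    (hlim : ∀ α : ι, (∀ β < α, ∃ γ, β < γ ∧ γ < α) →
      P α = ⨅ (β : ι) (_ : β < α), P β)
    (htriv : ⨅ α, P α = ⊥) :
    IsHomeomorph (fun x : X =>
        (⟨fun α => Quotient.mk (orbitRel (P α) X) x, fun _ _ _ => rfl⟩ :
          {u : ∀ α, Quotient (orbitRel (P α) X) //
            ∀ (α β : ι) (hab : α ≤ β), orbitProj X (hmono hab) (u β) = u α})) ∧
      ∀ (g : G) (x : X) (α : ι),
        haveI := hNor α
        Quotient.mk (orbitRel (P α) X) (g • x) =
          g • Quotient.mk (orbitRel (P α) X) x :=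
  stmt18_general P hNor hCl hmono htriv
end
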